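/- For any ε ∈ (0, 1/3), let γ = 1+ε and consider the single-processor instance consisting of, for each i ∈ [1..k], two unit tasks with windows [2i, 2i+3]γ and [2i+1, 2i+2]γ, plus one unit task whose window is either A = [2, 3]γ or B = [2k+2, 2k+3]γ. Then: (a) both instances (with A and with B) are ε-slack; and (b) every solution with window A and every solution with window B differ in the slots of at least k of the 2k shared tasks. -/

import Mathlib

/-- Windows of the small-slack instance: for `j ∈ [1..k]` a task with window
    `[2j, 2j+3]γ`; for `j ∈ [k+1..2k]` a task with window
    `[2(j-k)+1, 2(j-k)+2]γ`; and the extra task (index `2k+1`) with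
    window `we`. -/
noncomputable def ssWin (γ : ℝ) (k : ℕ) (we : ℝ × ℝ) (j : ℕ) : ℝ × ℝ :=
  if j ≤ k then (2 * (j : ℝ) * γ, (2 * (j : ℝ) + 3) * γ)
  else if j ≤ 2 * k then
    ((2 * ((j : ℝ) - (k : ℝ)) + 1) * γ, (2 * ((j : ℝ) - (k : ℝ)) + 2) * γ)
  else we

/-- `S` allocates each of the tasks `1..N` a slot of length `L` inside its
    window, with pairwise non-overlapping slots. -/
def ssSol (L : ℝ) (W : ℕ → ℝ × ℝ) (N : ℕ) (S : ℕ → ℝ) : Prop :=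
  (∀ j ∈ Finset.Icc 1 N, (W j).1 ≤ S j ∧ S j + L ≤ (W j).2) ∧
  (∀ i j, 1 ≤ i → 1 ≤ j → i ≤ N → j ≤ N → i ≠ j →
    S i + L ≤ S j ∨ S j + L ≤ S i)

/-- Slots at distinct integer multiples of `γ`, of length `γ`, are disjoint. -/
private lemma ss_slot_lemma (γ : ℝ) (hγ0 : 0 < γ) {m m' : ℕ} (h : m < m') :
    (m : ℝ) * γ + γ ≤ (m' : ℝ) * γ := by
  have h1 : (m : ℝ) + 1 ≤ (m' : ℝ) := by exact_mod_cast h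
  nlinarith

/-- A solution from an injective integer slot assignment. -/
private lemma ss_sol_of_m (γ L : ℝ) (hγ0 : 0 < γ) (hL : L = γ) (W : ℕ → ℝ × ℝ) (N : ℕ)
    (m : ℕ → ℕ)
    (hwin : ∀ j, 1 ≤ j → j ≤ N → (W j).1 ≤ (m j : ℝ) * γ ∧ ((m j : ℝ) + 1) * γ ≤ (W j).2)
    (hinj : ∀ i j, 1 ≤ i → 1 ≤ j → i ≤ N → j ≤ N → i ≠ j → m i ≠ m j) :
    ssSol L W N (fun j => (m j : ℝ) * γ) := by
  constructor
  · intro j hj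
    simp only [Finset.mem_Icc] at hj
    obtain ⟨h1, h2⟩ := hwin j hj.1 hj.2
    refine ⟨h1, ?_⟩
    show (m j : ℝ) * γ + L ≤ (W j).2
    have e : ((m j : ℝ) + 1) * γ = (m j : ℝ) * γ + γ := by ring
    rw [hL]; linarith
  · intro i j hi hj hiN hjN hij
    have hne := hinj i j hi hj hiN hjN hij
    rcases lt_or_gt_of_ne hne with h | h
    · refine Or.inl ?_
      show (m i : ℝ) * γ + L ≤ (m j : ℝ) * γ
      rw [hL]; exact ss_slot_lemma γ hγ0 h
    · refine Or.inr ?_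
      show (m j : ℝ) * γ + L ≤ (m i : ℝ) * γ
      rw [hL]; exact ss_slot_lemma γ hγ0 h

open Classical in
/-- Small-slack lower bound for variable window lengths.  For
    `ε ∈ (0, 1/3)`, `γ = 1 + ε`, both instances (extra window
    `A = [2,3]γ` or `B = [2k+2, 2k+3]γ`) are `ε`-slack, yet every solution of
    the `A`-instance and every solution of the `B`-instance differ in the
    slots of at least `k` of the `2k` shared tasks. -/
theorem small_slack_instances (ε γ : ℝ) (hε0 : 0 < ε) (hε1 : ε < 1 / 3)
    (hγ : γ = 1 + ε) (k : ℕ)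
    (A B : ℝ × ℝ) (hA : A = (2 * γ, 3 * γ))
    (hB : B = ((2 * (k : ℝ) + 2) * γ, (2 * (k : ℝ) + 3) * γ)) :
    ((∃ S, ssSol (1 + ε) (ssWin γ k A) (2 * k + 1) S) ∧
     (∃ S, ssSol (1 + ε) (ssWin γ k B) (2 * k + 1) S)) ∧
    (∀ SA SB : ℕ → ℝ,
      ssSol 1 (ssWin γ k A) (2 * k + 1) SA →
      ssSol 1 (ssWin γ k B) (2 * k + 1) SB →
      k ≤ ((Finset.Icc 1 (2 * k)).filter (fun j => SA j ≠ SB j)).card) := by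
  have hγ0 : (0:ℝ) < γ := by rw [hγ]; linarith
  have hγ1 : (1:ℝ) ≤ γ := by rw [hγ]; linarith
  have hγ2 : γ < 2 := by rw [hγ]; linarith
  have hγ4 : 3 * γ < 4 := by rw [hγ]; linarith
  constructor
  · -- existence of solutions with slack ε
    constructor
    · -- instance A : wide tasks at (2j+2)γ, narrow at (2(j-k)+1)γ, extra at 2γ
      refine ⟨_, ss_sol_of_m γ (1+ε) hγ0 hγ.symm _ _
        (fun j => if j ≤ k then 2*j+2 else if j ≤ 2*k then 2*(j-k)+1 else 2) ?_ ?_⟩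
      · intro j h1 h2
        by_cases hjk : j ≤ k
        · simp only [ssWin, if_pos hjk]
          push_cast
          constructor
          · nlinarith
          · nlinarith
        · by_cases hj2 : j ≤ 2*k
          · simp only [ssWin, if_neg hjk, if_pos hj2]
            have hc : ((2*(j-k)+1 : ℕ) : ℝ) = 2*((j:ℝ) - (k:ℝ)) + 1 := by
              have hkj : k ≤ j := by omega
              push_cast [hkj]; ring
            rw [hc]
            constructor
            · linarith
            · nlinarith
          · simp only [ssWin, if_neg hjk, if_neg hj2, hA]
            push_cast
            constructor
            · linarith
            · nlinarith
      · intro i j hi hj hiN hjN hij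
        split_ifs <;> omega
    · -- instance B : wide tasks at 2jγ, narrow at (2(j-k)+1)γ, extra at (2k+2)γ
      refine ⟨_, ss_sol_of_m γ (1+ε) hγ0 hγ.symm _ _
        (fun j => if j ≤ k then 2*j else if j ≤ 2*k then 2*(j-k)+1 else 2*k+2) ?_ ?_⟩
      · intro j h1 h2
        by_cases hjk : j ≤ k
        · simp only [ssWin, if_pos hjk]
          push_cast
          constructor
          · linarith
          · nlinarith
        · by_cases hj2 : j ≤ 2*k
          · simp only [ssWin, if_neg hjk, if_pos hj2]
            have hc : ((2*(j-k)+1 : ℕ) : ℝ) = 2*((j:ℝ) - (k:ℝ)) + 1 := by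
              have hkj : k ≤ j := by omega
              push_cast [hkj]; ring
            rw [hc]
            constructor
            · linarith
            · nlinarith
          · simp only [ssWin, if_neg hjk, if_neg hj2, hB]
            push_cast
            constructor
            · linarith
            · nlinarith
      · intro i j hi hj hiN hjN hij
        split_ifs <;> omega
  · -- lower bound on the number of differing slots
    intro SA SB hSA hSB
    rcases Nat.eq_zero_or_pos k with hk | hk
    · simp [hk]
    -- window facts for wide tasks
    have winW : ∀ (we : ℝ × ℝ) (S : ℕ → ℝ), ssSol 1 (ssWin γ k we) (2*k+1) S →
        ∀ i, 1 ≤ i → i ≤ k → 2*(i:ℝ)*γ ≤ S i ∧ S i + 1 ≤ 2*(i:ℝ)*γ + 3*γ := by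
      intro we S hS i h1 h2
      have h := hS.1 i (Finset.mem_Icc.mpr ⟨h1, by omega⟩)
      simp only [ssWin, if_pos h2] at h
      constructor
      · exact h.1
      · linarith [h.2]
    -- window facts for narrow tasks
    have winN : ∀ (we : ℝ × ℝ) (S : ℕ → ℝ), ssSol 1 (ssWin γ k we) (2*k+1) S →
        ∀ i, 1 ≤ i → i ≤ k →
          2*(i:ℝ)*γ + γ ≤ S (k+i) ∧ S (k+i) + 1 ≤ 2*(i:ℝ)*γ + 2*γ := by
      intro we S hS i h1 h2
      have h := hS.1 (k+i) (Finset.mem_Icc.mpr ⟨by omega, by omega⟩)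
      have e1 : ¬ (k + i ≤ k) := by omega
      have e2 : k + i ≤ 2*k := by omega
      simp only [ssWin, if_neg e1, if_pos e2] at h
      have ec : ((k+i : ℕ) : ℝ) - (k:ℝ) = (i:ℝ) := by push_cast; ring
      rw [ec] at h
      constructor
      · linarith [h.1]
      · linarith [h.2]
    -- extra task facts
    have winEA : 2*γ ≤ SA (2*k+1) ∧ SA (2*k+1) + 1 ≤ 3*γ := by
      have h := hSA.1 (2*k+1) (Finset.mem_Icc.mpr ⟨by omega, le_rfl⟩)
      simp only [ssWin, if_neg (show ¬ (2*k+1 ≤ k) by omega),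
        if_neg (show ¬ (2*k+1 ≤ 2*k) by omega), hA] at h
      exact h
    have winEB : 2*(k:ℝ)*γ + 2*γ ≤ SB (2*k+1) ∧ SB (2*k+1) + 1 ≤ 2*(k:ℝ)*γ + 3*γ := by
      have h := hSB.1 (2*k+1) (Finset.mem_Icc.mpr ⟨by omega, le_rfl⟩)
      simp only [ssWin, if_neg (show ¬ (2*k+1 ≤ k) by omega),
        if_neg (show ¬ (2*k+1 ≤ 2*k) by omega), hB] at h
      constructor
      · linarith [h.1]
      · linarith [h.2]
    -- the A-instance pushes every wide task to the right
    have lemA : ∀ i, 1 ≤ i → i ≤ k → 2*(i:ℝ)*γ + γ + 1 ≤ SA i := by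
      intro i hi1
      induction i, hi1 using Nat.le_induction with
      | base =>
        intro h1k
        obtain ⟨hw1, hw2⟩ := winW A SA hSA 1 le_rfl h1k
        obtain ⟨hn1, hn2⟩ := winN A SA hSA 1 le_rfl h1k
        obtain ⟨he1, he2⟩ := winEA
        have hd1 := hSA.2 1 (2*k+1) (by omega) (by omega) (by omega) le_rfl (by omega)
        have hd2 := hSA.2 1 (k+1) (by omega) (by omega) (by omega) (by omega) (by omega)
        push_cast at hw1 hw2 hn1 hn2 ⊢
        rcases hd1 with h | h
        · linarith
        · rcases hd2 with h' | h'
          · linarith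
          · linarith
      | succ n hn ih =>
        intro hk1
        have hb := ih (by omega)
        obtain ⟨hw1', hw2'⟩ := winW A SA hSA n (by omega) (by omega)
        obtain ⟨hw1, hw2⟩ := winW A SA hSA (n+1) (by omega) hk1
        obtain ⟨hn1, hn2⟩ := winN A SA hSA (n+1) (by omega) hk1
        have hd1 := hSA.2 (n+1) n (by omega) (by omega) (by omega) (by omega) (by omega)
        have hd2 := hSA.2 (n+1) (k+(n+1)) (by omega) (by omega) (by omega) (by omega)
          (by omega)
        push_cast at hb hw1' hw2' hw1 hw2 hn1 hn2 ⊢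
        rcases hd1 with h | h
        · linarith
        · rcases hd2 with h' | h'
          · linarith
          · linarith
    -- the B-instance pushes every wide task to the left
    have lemB : ∀ d i, i + d = k → 1 ≤ i → SB i ≤ 2*(i:ℝ)*γ + 2*γ - 2 := by
      intro d
      induction d with
      | zero =>
        intro i hik hi1
        have hik' : i = k := by omega
        rw [hik']
        obtain ⟨hw1, hw2⟩ := winW B SB hSB k hk le_rfl
        obtain ⟨hn1, hn2⟩ := winN B SB hSB k hk le_rfl
        obtain ⟨he1, he2⟩ := winEB
        have hd1 := hSB.2 k (2*k+1) (by omega) (by omega) (by omega) (by omega) (by omega)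
        have hd2 := hSB.2 k (k+k) (by omega) (by omega) (by omega) (by omega) (by omega)
        rcases hd1 with h | h
        · rcases hd2 with h' | h'
          · linarith
          · linarith
        · linarith
      | succ d ih =>
        intro i hik hi1
        have hnext := ih (i+1) (by omega) (by omega)
        obtain ⟨hw1, hw2⟩ := winW B SB hSB i hi1 (by omega)
        obtain ⟨hw1', hw2'⟩ := winW B SB hSB (i+1) (by omega) (by omega)
        obtain ⟨hn1, hn2⟩ := winN B SB hSB i hi1 (by omega)
        have hd1 := hSB.2 i (i+1) (by omega) (by omega) (by omega) (by omega) (by omega)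
        have hd2 := hSB.2 i (k+i) (by omega) (by omega) (by omega) (by omega) (by omega)
        push_cast at hnext hw1' hw2' ⊢
        rcases hd1 with h | h
        · rcases hd2 with h' | h'
          · linarith
          · linarith
        · linarith
    -- on `[1..k]` the two solutions differ everywhere
    have hdiff : ∀ i, 1 ≤ i → i ≤ k → SA i ≠ SB i := by
      intro i h1 h2 heq
      have ha := lemA i h1 h2
      have hb := lemB (k - i) i (by omega) h1
      rw [heq] at ha
      linarith
    have hsub : Finset.Icc 1 k ⊆ (Finset.Icc 1 (2*k)).filter fun j => SA j ≠ SB j := by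
      intro j hj
      simp only [Finset.mem_Icc] at hj
      simp only [Finset.mem_filter, Finset.mem_Icc]
      exact ⟨⟨hj.1, by omega⟩, hdiff j hj.1 hj.2⟩
    calc k = (Finset.Icc 1 k).card := by rw [Nat.card_Icc]; omega
      _ ≤ _ := Finset.card_le_card hsub
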